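/- arXiv:1405.6538 — 2 statements merged into one kernel-verified Lean document; each statement's English description precedes it below -/
import Mathlib

section
/- Let B be a unital C*-algebra (a complex C*-algebra with unit), let u ∈ B be a unitary, let n ≥ 1, and let V be a unitary n×n complex matrix. Define the n×n matrix W over B by W_{ij} = V_{ij} · u^{j−i+1} (integer powers of the invertible element u, indices i, j running from 1 to n). Then: (a) W is a unitary element of the C*-algebra of n×n matrices over B; (b) for every a ∈ B, W · diag(u^{−1} a u, u^{−2} a u², …, u^{−n} a u^{n}) · W* = diag(a, u^{−1} a u, …, u^{−(n−1)} a u^{n−1}). -/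
/-!
Let `D = diag(u⁰, u⁻¹, …, u^{-(n-1)})` and `E = diag(u, u², …, uⁿ)`, and let `V` act on `Bⁿ` through
the scalars `ℂ ⊆ B`. Then `W = D V E` is a product of unitaries. The left-hand diagonal matrix is
`E* (a·1) E`, and `V` commutes with the scalar matrix `a·1` because its entries are central, so
`W E* (a·1) E W* = D V (a·1) V* D* = D (a·1) D*`, which is the right-hand diagonal matrix.
-/

namespace Matrix

variable {n : Type*} [Fintype n] [DecidableEq n]

lemma diagonal_mem_unitary {A : Type*} [Semiring A] [StarRing A] {d : n → A}
    (hd : ∀ i, d i ∈ unitary A) : diagonal d ∈ unitary (Matrix n n A) := by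
  rw [Unitary.mem_iff, star_eq_conjTranspose, diagonal_conjTranspose, diagonal_mul_diagonal,
    diagonal_mul_diagonal, ← diagonal_one]
  exact ⟨congrArg diagonal (funext fun i => Unitary.star_mul_self_of_mem (hd i)),
    congrArg diagonal (funext fun i => Unitary.mul_star_self_of_mem (hd i))⟩

lemma map_mem_unitary {R A : Type*} [Semiring R] [StarRing R] [Semiring A] [StarRing A]
    (f : R →+* A) (hf : ∀ r, f (star r) = star (f r)) {V : Matrix n n R}
    (hV : V ∈ unitary (Matrix n n R)) : V.map f ∈ unitary (Matrix n n A) := by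
  have hstar : star (V.map f) = (star V).map f := by
    rw [star_eq_conjTranspose, star_eq_conjTranspose, conjTranspose_map f hf]
  rw [Unitary.mem_iff, hstar, ← Matrix.map_mul, ← Matrix.map_mul, Unitary.star_mul_self_of_mem hV,
    Unitary.mul_star_self_of_mem hV, Matrix.map_one f f.map_zero f.map_one]
  exact ⟨rfl, rfl⟩

lemma commute_map_algebraMap_scalar {R A : Type*} [CommSemiring R] [Semiring A] [Algebra R A]
    (M : Matrix n n R) (a : A) : Commute (M.map (algebraMap R A)) (scalar n a) := by
  ext i j
  simp [scalar_apply, Algebra.commutes]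

end Matrix

lemma Unitary.coe_zpow_neg {B : Type*} [Monoid B] [StarMul B] (u : unitary B) (k : ℤ) :
    ((u ^ (-k) : unitary B) : B) = star ((u ^ k : unitary B) : B) := by
  rw [zpow_neg, ← Unitary.star_eq_inv, Unitary.coe_star]

lemma conj_star_conj_eq_of_commute {S : Type*} [Monoid S] [StarMul S] (d : S) {m e x : S}
    (hm : m ∈ unitary S) (he : e ∈ unitary S) (hx : Commute m x) :
    d * m * e * (star e * x * e) * star (d * m * e) = d * x * star d := by
  have he' := Unitary.mul_star_self_of_mem he
  calc d * m * e * (star e * x * e) * star (d * m * e)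
      = d * m * (e * star e) * x * (e * star e) * star m * star d := by
        simp only [star_mul, mul_assoc]
    _ = d * (m * x) * star m * star d := by simp only [he', mul_one, mul_assoc]
    _ = d * x * (m * star m) * star d := by rw [hx.eq]; simp only [mul_assoc]
    _ = d * x * star d := by rw [Unitary.mul_star_self_of_mem hm, mul_one]

theorem schur_twisted_unitary_conj_general
    {B : Type*} [CStarAlgebra B] (u : unitary B) {n : ℕ}
    (V : Matrix (Fin n) (Fin n) ℂ) (hV : V ∈ Matrix.unitaryGroup (Fin n) ℂ)
    (W : Matrix (Fin n) (Fin n) B)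
    (hW : ∀ i j : Fin n, W i j = V i j • ((u ^ ((j : ℤ) - (i : ℤ) + 1) : unitary B) : B)) :
    W ∈ unitary (Matrix (Fin n) (Fin n) B) ∧
      ∀ a : B,
        W * Matrix.diagonal
              (fun i : Fin n => ((u ^ (-((i : ℤ) + 1)) : unitary B) : B) * a *
                ((u ^ ((i : ℤ) + 1) : unitary B) : B)) * star W =
          Matrix.diagonal
            (fun i : Fin n => ((u ^ (-(i : ℤ)) : unitary B) : B) * a *
              ((u ^ ((i : ℤ)) : unitary B) : B)) := by
  set D := Matrix.diagonal fun i : Fin n => ((u ^ (-(i : ℤ)) : unitary B) : B)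
  set E := Matrix.diagonal fun i : Fin n => ((u ^ ((i : ℤ) + 1) : unitary B) : B)
  have hD : D ∈ unitary _ := Matrix.diagonal_mem_unitary fun i => (u ^ _).2
  have hE : E ∈ unitary _ := Matrix.diagonal_mem_unitary fun i => (u ^ _).2
  have hVB := Matrix.map_mem_unitary (algebraMap ℂ B) algebraMap_star_comm hV
  have hWeq : W = D * V.map (algebraMap ℂ B) * E := by
    ext i j
    rw [hW, Matrix.mul_diagonal, Matrix.diagonal_mul, Matrix.map_apply, ← Algebra.commutes,
      mul_assoc, ← Submonoid.coe_mul, ← zpow_add, ← Algebra.smul_def]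
    ring_nf
  refine ⟨hWeq ▸ mul_mem (mul_mem hD hVB) hE, fun a => ?_⟩
  have hlhs : Matrix.diagonal (fun i : Fin n => ((u ^ (-((i : ℤ) + 1)) : unitary B) : B) * a *
      ((u ^ ((i : ℤ) + 1) : unitary B) : B)) = star E * Matrix.scalar (Fin n) a * E := by
    simp only [E, Matrix.scalar_apply, Matrix.star_eq_conjTranspose, Matrix.diagonal_conjTranspose,
      Matrix.diagonal_mul_diagonal, Pi.star_apply, Unitary.coe_zpow_neg]
  have hrhs : Matrix.diagonal (fun i : Fin n => ((u ^ (-(i : ℤ)) : unitary B) : B) * a *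
      ((u ^ ((i : ℤ)) : unitary B) : B)) = D * Matrix.scalar (Fin n) a * star D := by
    simp only [D, Matrix.scalar_apply, Matrix.star_eq_conjTranspose, Matrix.diagonal_conjTranspose,
      Matrix.diagonal_mul_diagonal, Pi.star_apply, Unitary.coe_zpow_neg, star_star]
  rw [hWeq, hlhs, hrhs]
  exact conj_star_conj_eq_of_commute D hVB hE (Matrix.commute_map_algebraMap_scalar V a)

/-- Let `B` be a unital C*-algebra, `u ∈ B` unitary, `n ≥ 1` and `V` a unitary
`n × n` complex matrix.  The matrix `W` with entries `W i j = V i j • u ^ (j - i + 1)` is a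
unitary element of `Mₙ(B)` and conjugation by `W` carries `diag (u⁻¹ a u, …, u⁻ⁿ a uⁿ)` to
`diag (a, u⁻¹ a u, …, u^{-(n-1)} a u^{n-1})` for every `a ∈ B`. -/
theorem schur_twisted_unitary_conj
    {B : Type*} [CStarAlgebra B] (u : unitary B) {n : ℕ} (hn : 1 ≤ n)
    (V : Matrix (Fin n) (Fin n) ℂ) (hV : V ∈ Matrix.unitaryGroup (Fin n) ℂ)
    (W : Matrix (Fin n) (Fin n) B)
    (hW : ∀ i j : Fin n, W i j = V i j • ((u ^ ((j : ℤ) - (i : ℤ) + 1) : unitary B) : B)) :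
    W ∈ unitary (Matrix (Fin n) (Fin n) B) ∧
      ∀ a : B,
        W * Matrix.diagonal
              (fun i : Fin n => ((u ^ (-((i : ℤ) + 1)) : unitary B) : B) * a *
                ((u ^ ((i : ℤ) + 1) : unitary B) : B)) * star W =
          Matrix.diagonal
            (fun i : Fin n => ((u ^ (-(i : ℤ)) : unitary B) : B) * a *
              ((u ^ ((i : ℤ)) : unitary B) : B)) :=
  schur_twisted_unitary_conj_general u V hV W hW
end

section
/- Let n ≥ 2, set m = ⌊n/2⌋, and let κ_n be the n×n complex matrix with entries (κ_n)_{ij} = min{i, j, n+1−i, n+1−j} / (m+1) (indices 1 ≤ i, j ≤ n). Then for every C*-algebra A, the Schur multiplication map x ↦ κ_n ∗ x on the C*-algebra of n×n matrices over A is positive (it sends positive elements to positive elements) and contractive (‖κ_n ∗ x‖ ≤ ‖x‖ for all x). -/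
/-!
Write `d i = min (i + 1) (n - i)` for the depth of the index `i` and `m = n / 2`. Since
`d i ≤ m + 1`, exactly `min (d i) (d j)` levels `k ≤ m` satisfy `k < d i` and `k < d j`, so
`κₙ = (m + 1)⁻¹ ∑ₖ 1_{Sₖ} 1_{Sₖ}ᵀ` with `Sₖ = {i | k < d i}`. Schur multiplication by `κₙ` is
therefore an average of compressions `x ↦ Pₖ x Pₖ` by coordinate projections. A compression
does not increase the norm of `x` acting on `Aⁿ`, and it maps `y⋆y` to `(y Pₖ)⋆(y Pₖ)`; a sum of
such elements is positive, hence again of the form `z⋆z` by the continuous functional calculus.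
-/

/-- The norm of a vector in the Hilbert `A`-module `Aⁿ`. -/
noncomputable def vecNorm {A : Type*} [NonUnitalCStarAlgebra A] {n : ℕ} (v : Fin n → A) : ℝ :=
  Real.sqrt ‖∑ i, star (v i) * v i‖

/-- The C*-norm on `n × n` matrices over a C*-algebra `A`: the operator norm of the natural
action of a matrix on the Hilbert `A`-module `Aⁿ`. -/
noncomputable def cstarMatrixNorm {A : Type*} [NonUnitalCStarAlgebra A] {n : ℕ}
    (z : Matrix (Fin n) (Fin n) A) : ℝ :=
  sInf {c : ℝ | 0 ≤ c ∧ ∀ v : Fin n → A, vecNorm (z.mulVec v) ≤ c * vecNorm v}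

open Finset

theorem CStarAlgebra.exists_sum_star_mul_self_eq_star_mul_self {B ι : Type*}
    [NonUnitalCStarAlgebra B] (s : Finset ι) (f : ι → B) :
    ∃ z, ∑ k ∈ s, star (f k) * f k = star z * z := by
  let := CStarAlgebra.spectralOrder B
  have := CStarAlgebra.spectralOrderedRing B
  exact CStarAlgebra.nonneg_iff_eq_star_mul_self.mp (sum_nonneg fun k _ => star_mul_self_nonneg _)

theorem Matrix.exists_sum_star_mul_self_eq_star_mul_self {A ι K : Type*}
    [NonUnitalCStarAlgebra A] [Fintype ι] (s : Finset K) (f : K → Matrix ι ι A) :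
    ∃ z, ∑ k ∈ s, star (f k) * f k = star z * z := by
  let := CStarAlgebra.spectralOrder A
  have := CStarAlgebra.spectralOrderedRing A
  exact CStarAlgebra.exists_sum_star_mul_self_eq_star_mul_self (B := CStarMatrix ι ι A) s f

section VecNorm

variable {A : Type*} [NonUnitalCStarAlgebra A] {n : ℕ}

theorem vecNorm_nonneg (v : Fin n → A) : 0 ≤ vecNorm v := Real.sqrt_nonneg _

-- The Hilbert module `C⋆ᵐᵒᵈ(A, Fin n → A)` has `⟪x, y⟫ = ∑ i, y i * star (x i)`, hence the `star`.
theorem vecNorm_eq_norm [PartialOrder A] [StarOrderedRing A] (v : Fin n → A) :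
    vecNorm v = ‖(WithCStarModule.equiv A (Fin n → A)).symm (star v)‖ := by
  simp [vecNorm, WithCStarModule.pi_norm, WithCStarModule.inner_def]

theorem vecNorm_sum_le {K : Type*} (s : Finset K) (f : K → Fin n → A) :
    vecNorm (∑ k ∈ s, f k) ≤ ∑ k ∈ s, vecNorm (f k) := by
  let := CStarAlgebra.spectralOrder A
  have := CStarAlgebra.spectralOrderedRing A
  simp only [vecNorm_eq_norm, star_sum]
  exact norm_sum_le _ _

theorem vecNorm_smul (c : ℂ) (v : Fin n → A) : vecNorm (c • v) = ‖c‖ * vecNorm v := by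
  let := CStarAlgebra.spectralOrder A
  have := CStarAlgebra.spectralOrderedRing A
  rw [vecNorm_eq_norm, vecNorm_eq_norm, star_smul, WithCStarModule.equiv_symm_smul, norm_smul,
    norm_star]

theorem vecNorm_piecewise_zero_le (s : Finset (Fin n)) (v : Fin n → A) :
    vecNorm (s.piecewise v 0) ≤ vecNorm v := by
  let := CStarAlgebra.spectralOrder A
  have := CStarAlgebra.spectralOrderedRing A
  refine Real.sqrt_le_sqrt (CStarAlgebra.norm_le_norm_of_nonneg_of_le
    (sum_nonneg fun i _ => star_mul_self_nonneg _) ?_)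
  calc ∑ i, star (s.piecewise v 0 i) * s.piecewise v 0 i = ∑ i ∈ s, star (v i) * v i := by
        simp [Finset.piecewise, apply_ite, Finset.sum_ite_mem]
    _ ≤ ∑ i, star (v i) * v i :=
        sum_le_sum_of_subset_of_nonneg (subset_univ s) fun i _ _ => star_mul_self_nonneg _

theorem exists_vecNorm_mulVec_le (x : Matrix (Fin n) (Fin n) A) :
    ∃ c, 0 ≤ c ∧ ∀ v, vecNorm (x.mulVec v) ≤ c * vecNorm v := by
  let := CStarAlgebra.spectralOrder A
  have := CStarAlgebra.spectralOrderedRing A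
  refine ⟨∑ i, ∑ j, ‖x i j‖, by positivity, fun v => ?_⟩
  have hv : ∀ j, ‖v j‖ ≤ vecNorm v := fun j => by
    simpa [vecNorm_eq_norm] using WithCStarModule.norm_apply_le_norm
      ((WithCStarModule.equiv A (Fin n → A)).symm (star v)) j
  calc vecNorm (x.mulVec v) ≤ ∑ i, ‖x.mulVec v i‖ := by
        simpa [vecNorm_eq_norm] using WithCStarModule.pi_norm_le_sum_norm
          ((WithCStarModule.equiv A (Fin n → A)).symm (star (x.mulVec v)))
    _ ≤ ∑ i, ∑ j, ‖x i j‖ * vecNorm v := by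
        gcongr with i
        rw [Matrix.mulVec, dotProduct]
        refine (norm_sum_le _ _).trans (sum_le_sum fun j _ => ?_)
        exact (norm_mul_le _ _).trans (mul_le_mul_of_nonneg_left (hv j) (norm_nonneg _))
    _ = (∑ i, ∑ j, ‖x i j‖) * vecNorm v := by simp only [sum_mul]

end VecNorm

namespace Matrix

section Compress

variable {ι A : Type*} [DecidableEq ι]

-- `P x P` for the coordinate projection `P` onto `s`, written entrywise since `A` need not be
-- unital.
def compress [Zero A] (s : Finset ι) (x : Matrix ι ι A) : Matrix ι ι A :=
  of fun i j => if i ∈ s ∧ j ∈ s then x i j else 0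

def schurMul [SMul ℂ A] (κ : Matrix ι ι ℂ) (x : Matrix ι ι A) : Matrix ι ι A :=
  of fun i j => κ i j • x i j

def weightedBlockSum {K : Type*} [Fintype K] (w : K → ℝ) (S : K → Finset ι) : Matrix ι ι ℂ :=
  of fun i j => ∑ k, if i ∈ S k ∧ j ∈ S k then (w k : ℂ) else 0

theorem schurMul_weightedBlockSum [AddCommMonoid A] [Module ℂ A] {K : Type*} [Fintype K]
    (w : K → ℝ) (S : K → Finset ι) (x : Matrix ι ι A) :
    schurMul (weightedBlockSum w S) x = ∑ k, (w k : ℂ) • compress (S k) x := by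
  ext i j
  simp [schurMul, weightedBlockSum, compress, sum_apply, sum_smul, ite_smul]

variable [Fintype ι]

theorem compress_mulVec [NonUnitalNonAssocSemiring A] (s : Finset ι) (x : Matrix ι ι A)
    (v : ι → A) : compress s x *ᵥ v = s.piecewise (x *ᵥ s.piecewise v 0) 0 := by
  ext i
  by_cases hi : i ∈ s <;> simp [compress, mulVec, dotProduct, hi, Finset.piecewise, ite_and]

theorem compress_star_mul_self [NonUnitalSemiring A] [StarRing A] (s : Finset ι)
    (y : Matrix ι ι A) :
    compress s (star y * y) =
      star (of fun l => s.piecewise (y l) 0) * of fun l => s.piecewise (y l) 0 := by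
  ext i j
  by_cases hi : i ∈ s <;> by_cases hj : j ∈ s <;>
    simp [compress, mul_apply, star_apply, hi, hj, Finset.piecewise]

end Compress

section CStarAlgebra

variable {A : Type*} [NonUnitalCStarAlgebra A] {n : ℕ}

theorem cstarMatrixNorm_le_of_forall_vecNorm_mulVec_le {x y : Matrix (Fin n) (Fin n) A}
    (h : ∀ c, 0 ≤ c → (∀ v, vecNorm (x *ᵥ v) ≤ c * vecNorm v) →
      ∀ v, vecNorm (y *ᵥ v) ≤ c * vecNorm v) :
    cstarMatrixNorm y ≤ cstarMatrixNorm x :=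
  csInf_le_csInf ⟨0, fun _ hc => hc.1⟩ (exists_vecNorm_mulVec_le x)
    fun c hc => ⟨hc.1, h c hc.1 hc.2⟩

theorem vecNorm_compress_mulVec_le {x : Matrix (Fin n) (Fin n) A} {c : ℝ} (hc : 0 ≤ c)
    (hx : ∀ v, vecNorm (x *ᵥ v) ≤ c * vecNorm v) (s : Finset (Fin n)) (v : Fin n → A) :
    vecNorm (compress s x *ᵥ v) ≤ c * vecNorm v := by
  rw [compress_mulVec]
  calc _ ≤ vecNorm (x *ᵥ s.piecewise v 0) := vecNorm_piecewise_zero_le _ _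
    _ ≤ c * vecNorm (s.piecewise v 0) := hx _
    _ ≤ c * vecNorm v := mul_le_mul_of_nonneg_left (vecNorm_piecewise_zero_le _ _) hc

variable {K : Type*} [Fintype K] {w : K → ℝ}

theorem cstarMatrixNorm_schurMul_weightedBlockSum_le (hw : ∀ k, 0 ≤ w k) (hw₁ : ∑ k, w k ≤ 1)
    (S : K → Finset (Fin n)) (x : Matrix (Fin n) (Fin n) A) :
    cstarMatrixNorm (schurMul (weightedBlockSum w S) x) ≤ cstarMatrixNorm x := by
  refine cstarMatrixNorm_le_of_forall_vecNorm_mulVec_le fun c hc hx v => ?_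
  rw [schurMul_weightedBlockSum, sum_mulVec]
  calc _ ≤ ∑ k, vecNorm (((w k : ℂ) • compress (S k) x) *ᵥ v) := vecNorm_sum_le _ _
    _ ≤ ∑ k, w k * (c * vecNorm v) := by
        gcongr with k
        rw [smul_mulVec, vecNorm_smul, Complex.norm_real, Real.norm_of_nonneg (hw k)]
        exact mul_le_mul_of_nonneg_left (vecNorm_compress_mulVec_le hc hx _ _) (hw k)
    _ ≤ c * vecNorm v := by
        rw [← sum_mul]
        exact mul_le_of_le_one_left (mul_nonneg hc (vecNorm_nonneg v)) hw₁

theorem exists_schurMul_weightedBlockSum_star_mul_self (hw : ∀ k, 0 ≤ w k)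
    (S : K → Finset (Fin n)) (y : Matrix (Fin n) (Fin n) A) :
    ∃ z, schurMul (weightedBlockSum w S) (star y * y) = star z * z := by
  let z k : Matrix (Fin n) (Fin n) A :=
    ((Real.sqrt (w k) : ℝ) : ℂ) • of fun l => (S k).piecewise (y l) 0
  have hz : ∀ k, (w k : ℂ) • compress (S k) (star y * y) = star (z k) * z k := fun k => by
    rw [compress_star_mul_self, star_smul, smul_mul_smul_comm, Complex.star_def,
      Complex.conj_ofReal, ← Complex.ofReal_mul, Real.mul_self_sqrt (hw k)]
  simp only [schurMul_weightedBlockSum, hz]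
  exact exists_sum_star_mul_self_eq_star_mul_self _ _

end CStarAlgebra

end Matrix

def Fin.depth {n : ℕ} (i : Fin n) : ℕ := min ((i : ℕ) + 1) (n - i)

theorem Fin.depth_le_half_add_one {n : ℕ} (i : Fin n) : i.depth ≤ n / 2 + 1 := by
  have := i.isLt
  unfold Fin.depth
  omega

theorem kappa_eq_weightedBlockSum {n : ℕ} {κ : Matrix (Fin n) (Fin n) ℂ}
    (hκ : ∀ i j : Fin n, κ i j =
      ((min (min ((i : ℕ) + 1) ((j : ℕ) + 1)) (min (n - (i : ℕ)) (n - (j : ℕ))) : ℕ) : ℂ) /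
        ((n / 2 : ℕ) + 1 : ℕ)) :
    κ = Matrix.weightedBlockSum (fun _ : Fin (n / 2 + 1) => ((n / 2 + 1 : ℕ) : ℝ)⁻¹)
      fun k => {l | (k : ℕ) < l.depth} := by
  ext i j
  have hmin : min (min ((i : ℕ) + 1) ((j : ℕ) + 1)) (min (n - (i : ℕ)) (n - (j : ℕ)))
      = min i.depth j.depth := by
    unfold Fin.depth
    omega
  have hcard : #{k : Fin (n / 2 + 1) | (k : ℕ) < min i.depth j.depth} = min i.depth j.depth := by
    rw [Fin.card_filter_val_lt]
    exact min_eq_right ((min_le_left _ _).trans i.depth_le_half_add_one)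
  simp only [Matrix.weightedBlockSum, Matrix.of_apply, mem_filter, mem_univ, true_and,
    ← lt_min_iff]
  rw [← sum_filter, sum_const, hcard, hκ, hmin, nsmul_eq_mul, div_eq_mul_inv]
  push_cast
  ring

theorem schur_mult_kappa_pos_and_contractive_general
    {A : Type*} [NonUnitalCStarAlgebra A] {n : ℕ}
    (κ : Matrix (Fin n) (Fin n) ℂ)
    (hκ : ∀ i j : Fin n, κ i j =
      ((min (min ((i : ℕ) + 1) ((j : ℕ) + 1)) (min (n - (i : ℕ)) (n - (j : ℕ))) : ℕ) : ℂ) /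
        ((n / 2 : ℕ) + 1 : ℕ)) :
    (∀ x : Matrix (Fin n) (Fin n) A, (∃ y, x = star y * y) →
      ∃ z, (Matrix.of fun i j => κ i j • x i j) = star z * z) ∧
    (∀ x : Matrix (Fin n) (Fin n) A,
      cstarMatrixNorm (Matrix.of fun i j => κ i j • x i j) ≤ cstarMatrixNorm x) := by
  obtain rfl := kappa_eq_weightedBlockSum hκ
  have hw : ∀ _ : Fin (n / 2 + 1), (0 : ℝ) ≤ ((n / 2 + 1 : ℕ) : ℝ)⁻¹ := fun _ => by positivity
  have hw₁ : ∑ _ : Fin (n / 2 + 1), ((n / 2 + 1 : ℕ) : ℝ)⁻¹ ≤ 1 := by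
    rw [sum_const, card_univ, Fintype.card_fin, nsmul_eq_mul, mul_inv_cancel₀ (by positivity)]
  refine ⟨?_, Matrix.cstarMatrixNorm_schurMul_weightedBlockSum_le hw hw₁ _⟩
  rintro x ⟨y, rfl⟩
  exact Matrix.exists_schurMul_weightedBlockSum_star_mul_self hw _ y

/-- For `n ≥ 2` and `m = ⌊n / 2⌋`, let `κₙ` be the `n × n` matrix with
(`1`-based) entries `min (i, j, n+1-i, n+1-j) / (m + 1)`; in `0`-based indexing the `(i, j)`
entry is `min (i+1, j+1, n-i, n-j) / (m+1)`.  For every C*-algebra `A`, Schur multiplication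
by `κₙ` on `Mₙ(A)` is positive (it maps positive elements, i.e. elements of the form
`star y * y`, to positive elements) and contractive for the C*-norm. -/
theorem schur_mult_kappa_pos_and_contractive
    {A : Type*} [NonUnitalCStarAlgebra A] {n : ℕ} (hn : 2 ≤ n)
    (κ : Matrix (Fin n) (Fin n) ℂ)
    (hκ : ∀ i j : Fin n, κ i j =
      ((min (min ((i : ℕ) + 1) ((j : ℕ) + 1)) (min (n - (i : ℕ)) (n - (j : ℕ))) : ℕ) : ℂ) /
        ((n / 2 : ℕ) + 1 : ℕ)) :
    (∀ x : Matrix (Fin n) (Fin n) A, (∃ y, x = star y * y) →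
      ∃ z, (Matrix.of fun i j => κ i j • x i j) = star z * z) ∧
    (∀ x : Matrix (Fin n) (Fin n) A,
      cstarMatrixNorm (Matrix.of fun i j => κ i j • x i j) ≤ cstarMatrixNorm x) :=
  schur_mult_kappa_pos_and_contractive_general κ hκ
end
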